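/- Let (N,h) be a pseudo-Riemannian manifold with a parallel symmetric 2-tensor S whose endomorphism satisfies S̃² = -Id (so h has split signature and even dimension). On M := ℝ × N define g = -ds² + h - sinh(2s)S. Then g is nondegenerate and the cone over (M,g) admits a nontrivial parallel symmetric 2-tensor T with T̃² = -Id. -/

import Mathlib

/-!
Writing `S = h(·, J·)` with `J² = -1`, the form `h - c S` is nondegenerate for every real `c`,
which is the nondegeneracy of `g`. On the cone, `T = ĝ(·, T̃·)` for an explicit endomorphism `T̃`
of square `-1`, and parallelism of `T` is a direct computation: Koszul's formula expresses
`ĝ(∇_u v, z)` through first derivatives of the coefficients of `ĝ`, and those of `h` and `S` are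
given by the connection of `N`, for which both are parallel. As the chart data carry no
smoothness assumption, differentiability of `h` and `S` is itself extracted from the existence of
the Levi-Civita connection of the cone.
-/

noncomputable section

/-- Covariant derivative of the vector field `Y` along `X`, for the connection
with Christoffel symbols `Γ` (chart presentation of a pseudo-Riemannian manifold):
`(D_X Y)(p) = dY_p(X(p)) + Γ_p(X(p), Y(p))`. -/
def covVF {E : Type*} [NormedAddCommGroup E] [NormedSpace ℝ E]
    (Γ : E → E → E → E) (X Y : E → E) : E → E :=
  fun p => fderiv ℝ Y p (X p) + Γ p (X p) (Y p)

/-- `g` is pointwise a symmetric bilinear form (a pseudo-Riemannian metric in a chart). -/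
def IsMetric {E : Type*} [NormedAddCommGroup E] [NormedSpace ℝ E]
    (g : E → E → E → ℝ) : Prop :=
  ∀ x, (∀ u, IsLinearMap ℝ (g x u)) ∧ (∀ v, IsLinearMap ℝ (fun u => g x u v)) ∧
    (∀ u v, g x u v = g x v u)

/-- `g` is nondegenerate at every point of `s`. -/
def Nondeg {E : Type*} [NormedAddCommGroup E] [NormedSpace ℝ E]
    (g : E → E → E → ℝ) (s : Set E) : Prop :=
  ∀ x ∈ s, ∀ u, (∀ v, g x u v = 0) → u = 0

/-- `Γ` is the Levi-Civita connection of `g` on `s`: torsion free (symmetric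
Christoffel symbols) and compatible with the metric. -/
def IsLC {E : Type*} [NormedAddCommGroup E] [NormedSpace ℝ E]
    (g : E → E → E → ℝ) (Γ : E → E → E → E) (s : Set E) : Prop :=
  (∀ x ∈ s, ∀ u v, Γ x u v = Γ x v u) ∧
  (∀ x ∈ s, ∀ u v w, fderiv ℝ (fun y => g y v w) x u
      = g x (Γ x u v) w + g x v (Γ x u w))

/-- Covariant Hessian `DDf` of a function (evaluated on constant directions,
which suffices since the Hessian is tensorial). -/
def hessT {E : Type*} [NormedAddCommGroup E] [NormedSpace ℝ E]
    (Γ : E → E → E → E) (f : E → ℝ) (x u v : E) : ℝ :=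
  fderiv ℝ (fun y => fderiv ℝ f y v) x u - fderiv ℝ f x (Γ x u v)

/-- Covariant derivative `DT` of a 2-tensor field `T`. -/
def covTen {E : Type*} [NormedAddCommGroup E] [NormedSpace ℝ E]
    (Γ : E → E → E → E) (T : E → E → E → ℝ) (x u v w : E) : ℝ :=
  fderiv ℝ (fun y => T y v w) x u - T x (Γ x u v) w - T x v (Γ x u w)

/-- The Obata equation (*) on `s`:
`DDDα(X,Y,Z) + 2(Dα⊗g)(X,Y,Z) + (Dα⊗g)(Y,X,Z) + (Dα⊗g)(Z,X,Y) = 0`. -/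
def ObataEq {E : Type*} [NormedAddCommGroup E] [NormedSpace ℝ E]
    (g : E → E → E → ℝ) (Γ : E → E → E → E) (α : E → ℝ) (s : Set E) : Prop :=
  ∀ x ∈ s, ∀ u v w : E,
    covTen Γ (hessT Γ α) x u v w
      + 2 * (fderiv ℝ α x u * g x v w)
      + fderiv ℝ α x v * g x u w + fderiv ℝ α x w * g x u v = 0

/-- The cone metric `ĝ = dr² + r² g` on the cone `M̂ = ℝ₊* × M`
(points `p = (r, m)`, tangent vectors `u = (a, X)` with `a` the `∂_r`-component). -/
def coneMetric {E : Type*} [NormedAddCommGroup E] [NormedSpace ℝ E]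
    (g : E → E → E → ℝ) : (ℝ × E) → (ℝ × E) → (ℝ × E) → ℝ :=
  fun p u v => u.1 * v.1 + p.1 ^ 2 * g p.2 u.2 v.2

/-- The cone `M̂ = ℝ₊* × M` inside the chart `ℝ × M`. -/
def coneSet (E : Type*) : Set (ℝ × E) := {p : ℝ × E | 0 < p.1}

open Real ContinuousLinearMap

section LeviCivita

variable {E : Type*} [NormedAddCommGroup E] [NormedSpace ℝ E]
  {g : E → E → E → ℝ} {Γ : E → E → E → E} {s : Set E} {p : E}

theorem IsLC.koszul (hΓ : IsLC g Γ s) (hg : ∀ x u v, g x u v = g x v u) (hp : p ∈ s)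
    (u v w : E) :
    2 * g p (Γ p u v) w =
      fderiv ℝ (fun y => g y v w) p u + fderiv ℝ (fun y => g y u w) p v
        - fderiv ℝ (fun y => g y u v) p w := by
  rw [hΓ.2 p hp u v w, hΓ.2 p hp v u w, hΓ.2 p hp w u v, hΓ.1 p hp v u, hΓ.1 p hp w u,
    hΓ.1 p hp w v, hg p v (Γ p u w), hg p u (Γ p v w)]
  ring

theorem IsLC.fderiv_apply_eq_of_fderiv_eq_zero (hΓ : IsLC g Γ s)
    (hg : ∀ x u v, g x u v = g x v u) (hp : p ∈ s) {X : E}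
    (hX : ∀ Z, fderiv ℝ (fun y => g y X Z) p = 0) (Y Z : E) :
    fderiv ℝ (fun y => g y Y Z) p X = 2 * g p (Γ p X Y) Z := by
  rw [hΓ.koszul hg hp, hX, hX]
  simp

theorem IsLC.two_mul_covTen_eq (hΓ : IsLC g Γ s) (hg : ∀ x u v, g x u v = g x v u) (hp : p ∈ s)
    {T : E → E → E → ℝ} {A : E → E} (hT : ∀ a b, T p a b = g p a (A b))
    (hTsymm : ∀ a b, T p a b = T p b a) (u v w : E) :
    2 * covTen Γ T p u v w =
      2 * fderiv ℝ (fun y => T y v w) p u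
        - (fderiv ℝ (fun y => g y v (A w)) p u + fderiv ℝ (fun y => g y u (A w)) p v
            - fderiv ℝ (fun y => g y u v) p (A w))
        - (fderiv ℝ (fun y => g y w (A v)) p u + fderiv ℝ (fun y => g y u (A v)) p w
            - fderiv ℝ (fun y => g y u w) p (A v)) := by
  rw [← hΓ.koszul hg hp, ← hΓ.koszul hg hp, covTen, hT, hTsymm, hT]
  ring

end LeviCivita

/-- This exploits the junk value: `fderiv` of a non-differentiable function is `0`. -/
theorem differentiableAt_of_fderiv_add_apply {E : Type*} [NormedAddCommGroup E]
    [NormedSpace ℝ E] {f k : E → ℝ} {p x : E} (hk : DifferentiableAt ℝ k p)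
    (hx : fderiv ℝ k p x ≠ 0)
    (hadd : fderiv ℝ (fun y => f y + k y) p x = fderiv ℝ f p x + fderiv ℝ k p x) :
    DifferentiableAt ℝ f p := by
  by_contra hf
  have hfk : ¬DifferentiableAt ℝ (fun y => f y + k y) p := fun hfk =>
    hf (by simpa only [add_sub_cancel_right] using hfk.fun_sub hk)
  rw [fderiv_zero_of_not_differentiableAt hfk, fderiv_zero_of_not_differentiableAt hf] at hadd
  exact hx (by simpa using hadd.symm)

section ProductCoordinates

variable {A B C : Type*} [NormedAddCommGroup A] [NormedSpace ℝ A] [NormedAddCommGroup B]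
  [NormedSpace ℝ B] [NormedAddCommGroup C] [NormedSpace ℝ C]

theorem fderiv_comp_snd_snd_apply {G : Type*} [NormedAddCommGroup G] [NormedSpace ℝ G]
    {φ : C → G} {p : A × (B × C)} (hφ : DifferentiableAt ℝ φ p.2.2) (u : A × (B × C)) :
    fderiv ℝ (fun y : A × (B × C) => φ y.2.2) p u = fderiv ℝ φ p.2.2 u.2.2 := by
  have hd : HasFDerivAt (fun y : A × (B × C) => φ y.2.2) _ p :=
    hφ.hasFDerivAt.comp p hasFDerivAt_snd.snd
  rw [hd.fderiv]
  rfl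

theorem fderiv_snd_fst_apply (p u : A × (B × C)) :
    fderiv ℝ (fun y : A × (B × C) => y.2.1) p u = u.2.1 := by
  rw [hasFDerivAt_snd.fst.fderiv]
  rfl

end ProductCoordinates

section ComplexStructure

variable {F : Type*} [InvolutiveNeg F]

structure IsComplexForm (h S : F → F → F → ℝ) (J : F → F → F) : Prop where
  symm : ∀ n u v, S n u v = S n v u
  eq_apply : ∀ n u v, S n u v = h n u (J n v)
  endo_endo : ∀ n u, J n (J n u) = -u

variable {h S : F → F → F → ℝ} {J : F → F → F}

theorem IsComplexForm.endo_neg (hS : IsComplexForm h S J) (n x : F) : J n (-x) = -J n x := by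
  rw [← hS.endo_endo n (J n x), ← hS.endo_endo n x]

/-- On the span of `∂r, r⁻¹ ∂s` this acts by the matrix
`[[-sinh 2s, -cosh 2s], [cosh 2s, sinh 2s]]`, whose square is `-1` because `cosh² - sinh² = 1`;
on `TN` it acts by `-J`. -/
def coneEndo (J : F → F → F) (p v : ℝ × (ℝ × F)) : ℝ × (ℝ × F) :=
  (-sinh (2 * p.2.1) * v.1 - p.1 * cosh (2 * p.2.1) * v.2.1,
    (cosh (2 * p.2.1) / p.1 * v.1 + sinh (2 * p.2.1) * v.2.1, -J p.2.2 v.2.2))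

theorem coneEndo_coneEndo (hS : IsComplexForm h S J) {p : ℝ × (ℝ × F)} (hp : p.1 ≠ 0)
    (v : ℝ × (ℝ × F)) : coneEndo J p (coneEndo J p v) = -v := by
  have hcs := cosh_sq (2 * p.2.1)
  simp only [coneEndo, hS.endo_neg, hS.endo_endo, neg_neg]
  refine Prod.ext ?_ (Prod.ext ?_ rfl) <;> simp only [Prod.fst_neg, Prod.snd_neg]
  · field_simp
    linear_combination (-v.1) * hcs
  · field_simp
    linear_combination (-v.2.1 * p.1) * hcs

end ComplexStructure

section SinhMetric

variable {F : Type*} [NormedAddCommGroup F] [NormedSpace ℝ F]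

def sinhMetric (h S : F → F → F → ℝ) : (ℝ × F) → (ℝ × F) → (ℝ × F) → ℝ :=
  fun x u v => -(u.1 * v.1) + h x.2 u.2 v.2 - sinh (2 * x.1) * S x.2 u.2 v.2

def coneForm (h S : F → F → F → ℝ) (p u v : ℝ × (ℝ × F)) : ℝ :=
  -sinh (2 * p.2.1) * (u.1 * v.1 + p.1 ^ 2 * (u.2.1 * v.2.1))
    - p.1 * cosh (2 * p.2.1) * (u.1 * v.2.1 + v.1 * u.2.1)
    - p.1 ^ 2 * (S p.2.2 u.2.2 v.2.2 + sinh (2 * p.2.1) * h p.2.2 u.2.2 v.2.2)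

variable {h S : F → F → F → ℝ} {J : F → F → F}

namespace IsComplexForm

theorem isLinearMap_left (hS : IsComplexForm h S J) (hh : IsMetric h) (n v : F) :
    IsLinearMap ℝ (fun u => S n u v) := by
  simpa only [hS.eq_apply] using (hh n).2.1 (J n v)

theorem isLinearMap_right (hS : IsComplexForm h S J) (hh : IsMetric h) (n u : F) :
    IsLinearMap ℝ (S n u) := by
  rw [show S n u = fun v => S n v u from funext (hS.symm n u)]
  exact hS.isLinearMap_left hh n u

theorem apply_endo (hS : IsComplexForm h S J) (hh : IsMetric h) (n u v : F) :
    S n u (J n v) = -h n u v := by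
  rw [hS.eq_apply, hS.endo_endo, ((hh n).1 u).map_neg]

/-- Test against `w + c J w`: `(h - c S)(u, w + c J w) = (1 + c²) h(u, w)`. -/
theorem eq_zero_of_forall_sub_mul_eq_zero (hS : IsComplexForm h S J) (hh : IsMetric h)
    (hhnd : Nondeg h Set.univ) {n u : F} (c : ℝ) (hu : ∀ w, h n u w - c * S n u w = 0) :
    u = 0 := by
  refine hhnd n trivial u fun w => ?_
  have hw := hu (w + c • J n w)
  rw [((hh n).1 u).map_add, ((hh n).1 u).map_smul, (hS.isLinearMap_right hh n u).map_add,
    (hS.isLinearMap_right hh n u).map_smul, ← hS.eq_apply, hS.apply_endo hh, smul_eq_mul,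
    smul_eq_mul] at hw
  have hw' : (1 + c ^ 2) * h n u w = 0 := by linear_combination hw
  exact (mul_eq_zero.mp hw').resolve_left (by positivity)

theorem metric_apply_neg_endo (hS : IsComplexForm h S J) (hh : IsMetric h)
    (n u v : F) : h n u (-J n v) = -S n u v := by
  rw [((hh n).1 u).map_neg, hS.eq_apply]

theorem apply_neg_endo (hS : IsComplexForm h S J) (hh : IsMetric h) (n u v : F) :
    S n u (-J n v) = h n u v := by
  rw [(hS.isLinearMap_right hh n u).map_neg, hS.apply_endo hh, neg_neg]

end IsComplexForm

theorem nondeg_sinhMetric (hh : IsMetric h) (hhnd : Nondeg h Set.univ)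
    (hS : IsComplexForm h S J) : Nondeg (sinhMetric h S) Set.univ := by
  intro x _ u hu
  have hS0 : ∀ n v, S n v 0 = 0 := fun n v => (hS.isLinearMap_right hh n v).map_zero
  have hfst : u.1 = 0 := by
    simpa [sinhMetric, ((hh x.2).1 u.2).map_zero, hS0] using hu (1, 0)
  have hsnd : u.2 = 0 := hS.eq_zero_of_forall_sub_mul_eq_zero hh hhnd (sinh (2 * x.1)) fun w =>
    by simpa [sinhMetric] using hu (0, w)
  exact Prod.ext hfst hsnd

section Cone

variable {Γ : (ℝ × (ℝ × F)) → (ℝ × (ℝ × F)) → (ℝ × (ℝ × F)) → (ℝ × (ℝ × F))}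

theorem coneMetric_sinhMetric_comm (hh : IsMetric h) (hSsymm : ∀ n u v, S n u v = S n v u)
    (p u v : ℝ × (ℝ × F)) :
    coneMetric (sinhMetric h S) p u v = coneMetric (sinhMetric h S) p v u := by
  simp only [coneMetric, sinhMetric, (hh p.2.2).2.2 u.2.2, hSsymm p.2.2 u.2.2]
  ring

theorem coneMetric_sinhMetric_add_right (hh : IsMetric h) (hS : IsComplexForm h S J)
    (p u v w : ℝ × (ℝ × F)) :
    coneMetric (sinhMetric h S) p u (v + w)
      = coneMetric (sinhMetric h S) p u v + coneMetric (sinhMetric h S) p u w := by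
  simp only [coneMetric, sinhMetric, Prod.fst_add, Prod.snd_add, ((hh p.2.2).1 u.2.2).map_add,
    (hS.isLinearMap_right hh p.2.2 u.2.2).map_add]
  ring

/-- `d_{∂r} ĝ(Y, Z) = 2 ĝ(∇_{∂r} Y, Z)` is additive in `Z`; for `Y = ∂s + V` the summand
`Z = ∂s` contributes `-2r ≠ 0`. -/
theorem differentiableAt_coneMetric_sinhMetric (hh : IsMetric h) (hS : IsComplexForm h S J)
    (hΓ : IsLC (coneMetric (sinhMetric h S)) Γ (coneSet (ℝ × F))) {p : ℝ × (ℝ × F)}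
    (hp : 0 < p.1) (V W : F) :
    DifferentiableAt ℝ
      (fun y => coneMetric (sinhMetric h S) y (0, (1, V)) (0, (0, W))) p := by
  have hh0 : ∀ n v, h n 0 v = 0 := fun n v => ((hh n).2.1 v).map_zero
  have hS0 : ∀ n v, S n 0 v = 0 := fun n v => (hS.isLinearMap_left hh n v).map_zero
  have hk : (fun y => coneMetric (sinhMetric h S) y (0, (1, V)) (0, (1, 0)))
      = fun y : ℝ × (ℝ × F) => -y.1 ^ 2 := by
    funext y
    simp only [coneMetric, sinhMetric, ((hh y.2.2).1 V).map_zero,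
      (hS.isLinearMap_right hh y.2.2 V).map_zero]
    ring
  have hdr : ∀ Z, fderiv ℝ (fun y => coneMetric (sinhMetric h S) y (1, (0, 0)) Z) p = 0 := by
    intro Z
    simp only [coneMetric, sinhMetric, hh0, hS0]
    simp
  have hderiv : ∀ Z,
      fderiv ℝ (fun y => coneMetric (sinhMetric h S) y (0, (1, V)) Z) p (1, (0, 0))
        = 2 * coneMetric (sinhMetric h S) p (Γ p (1, (0, 0)) (0, (1, V))) Z :=
    hΓ.fderiv_apply_eq_of_fderiv_eq_zero (coneMetric_sinhMetric_comm hh hS.symm) hp hdr _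
  refine differentiableAt_of_fderiv_add_apply (x := (1, (0, 0)))
    (k := fun y => coneMetric (sinhMetric h S) y (0, (1, V)) (0, (1, 0))) (by rw [hk]; fun_prop)
    ?_ ?_
  · rw [hk]
    simp (disch := fun_prop) [fderiv_fun_pow, fderiv_fst, hp.ne']
  · simp only [← coneMetric_sinhMetric_add_right hh hS, hderiv]
    rw [coneMetric_sinhMetric_add_right hh hS]
    ring

theorem differentiableAt_sub_sinh_mul_of_isLC_cone (hh : IsMetric h) (hS : IsComplexForm h S J)
    (hΓ : IsLC (coneMetric (sinhMetric h S)) Γ (coneSet (ℝ × F))) (c : ℝ) (n V W : F) :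
    DifferentiableAt ℝ (fun ν => h ν V W - sinh (2 * c) * S ν V W) n := by
  have hd := (differentiableAt_coneMetric_sinhMetric hh hS hΓ (p := (1, (c, n))) one_pos V W).comp
    n (by fun_prop : DifferentiableAt ℝ (fun ν : F => ((1 : ℝ), (c, ν))) n)
  have hcomp : (fun ν => h ν V W - sinh (2 * c) * S ν V W) =
      (fun y => coneMetric (sinhMetric h S) y (0, (1, V)) (0, (0, W))) ∘ fun ν => (1, (c, ν)) := by
    funext ν
    simp [coneMetric, sinhMetric]
  rw [hcomp]
  exact hd

theorem differentiableAt_of_isLC_cone (hh : IsMetric h) (hS : IsComplexForm h S J)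
    (hΓ : IsLC (coneMetric (sinhMetric h S)) Γ (coneSet (ℝ × F))) (n V W : F) :
    DifferentiableAt ℝ (fun ν => h ν V W) n ∧ DifferentiableAt ℝ (fun ν => S ν V W) n := by
  have hH : DifferentiableAt ℝ (fun ν => h ν V W) n := by
    simpa using differentiableAt_sub_sinh_mul_of_isLC_cone hh hS hΓ 0 n V W
  refine ⟨hH, ?_⟩
  have hsinh : sinh (2 * (arsinh 1 / 2)) = 1 := by
    rw [mul_div_cancel₀ _ two_ne_zero, sinh_arsinh]
  simpa [hsinh] using
    hH.fun_sub (differentiableAt_sub_sinh_mul_of_isLC_cone hh hS hΓ (arsinh 1 / 2) n V W)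

theorem fderiv_coneMetric_sinhMetric_apply {p : ℝ × (ℝ × F)} {v w : ℝ × (ℝ × F)}
    (hdh : DifferentiableAt ℝ (fun ν => h ν v.2.2 w.2.2) p.2.2)
    (hdS : DifferentiableAt ℝ (fun ν => S ν v.2.2 w.2.2) p.2.2) (u : ℝ × (ℝ × F)) :
    fderiv ℝ (fun y => coneMetric (sinhMetric h S) y v w) p u
      = 2 * p.1 * u.1 * (-(v.2.1 * w.2.1) + h p.2.2 v.2.2 w.2.2
            - sinh (2 * p.2.1) * S p.2.2 v.2.2 w.2.2)
        + p.1 ^ 2 * (fderiv ℝ (fun ν => h ν v.2.2 w.2.2) p.2.2 u.2.2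
            - 2 * cosh (2 * p.2.1) * u.2.1 * S p.2.2 v.2.2 w.2.2
            - sinh (2 * p.2.1) * fderiv ℝ (fun ν => S ν v.2.2 w.2.2) p.2.2 u.2.2) := by
  simp (disch := fun_prop) only [coneMetric, sinhMetric, fderiv_const_add, fderiv_fun_mul,
    fderiv_fun_sub, fderiv_fun_pow, fderiv_sinh, add_apply, sub_apply, smul_apply,
    fderiv_comp_snd_snd_apply hdh, fderiv_comp_snd_snd_apply hdS, fderiv_snd_fst_apply, fderiv_fst,
    fderiv_fun_const, smul_eq_mul, Pi.zero_apply, zero_apply, coe_fst', nsmul_eq_mul]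
  norm_num
  ring

theorem coneForm_eq_coneMetric_coneEndo (hh : IsMetric h) (hS : IsComplexForm h S J)
    (p u v : ℝ × (ℝ × F)) :
    coneForm h S p u v = coneMetric (sinhMetric h S) p u (coneEndo J p v) := by
  simp only [coneForm, coneEndo, coneMetric, sinhMetric, hS.metric_apply_neg_endo hh,
    hS.apply_neg_endo hh]
  rcases eq_or_ne p.1 0 with hp | hp
  · simp [hp]
    ring
  · field_simp
    ring

theorem coneForm_comm (hh : IsMetric h) (hSsymm : ∀ n u v, S n u v = S n v u)
    (p u v : ℝ × (ℝ × F)) : coneForm h S p u v = coneForm h S p v u := by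
  simp only [coneForm, hSsymm p.2.2 u.2.2, (hh p.2.2).2.2 u.2.2]
  ring

theorem fderiv_coneForm_apply {p : ℝ × (ℝ × F)} {v w : ℝ × (ℝ × F)}
    (hdh : DifferentiableAt ℝ (fun ν => h ν v.2.2 w.2.2) p.2.2)
    (hdS : DifferentiableAt ℝ (fun ν => S ν v.2.2 w.2.2) p.2.2) (u : ℝ × (ℝ × F)) :
    fderiv ℝ (fun y => coneForm h S y v w) p u
      = -(2 * cosh (2 * p.2.1) * u.2.1) * (v.1 * w.1 + p.1 ^ 2 * (v.2.1 * w.2.1))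
          - sinh (2 * p.2.1) * (2 * p.1 * u.1 * (v.2.1 * w.2.1))
        - (u.1 * cosh (2 * p.2.1) + 2 * p.1 * sinh (2 * p.2.1) * u.2.1)
            * (v.1 * w.2.1 + w.1 * v.2.1)
        - 2 * p.1 * u.1 * (S p.2.2 v.2.2 w.2.2 + sinh (2 * p.2.1) * h p.2.2 v.2.2 w.2.2)
        - p.1 ^ 2 * (fderiv ℝ (fun ν => S ν v.2.2 w.2.2) p.2.2 u.2.2
            + 2 * cosh (2 * p.2.1) * u.2.1 * h p.2.2 v.2.2 w.2.2
            + sinh (2 * p.2.1) * fderiv ℝ (fun ν => h ν v.2.2 w.2.2) p.2.2 u.2.2) := by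
  simp (disch := fun_prop) only [coneForm, fderiv_fun_mul, fderiv_fun_add, fderiv_fun_sub,
    fderiv_fun_neg, fderiv_fun_pow, fderiv_sinh, fderiv_cosh, add_apply, sub_apply, smul_apply,
    neg_apply, fderiv_comp_snd_snd_apply hdh, fderiv_comp_snd_snd_apply hdS, fderiv_snd_fst_apply,
    fderiv_fst, fderiv_fun_const, smul_eq_mul, Pi.zero_apply, zero_apply, coe_fst', nsmul_eq_mul]
  norm_num
  ring

theorem covTen_coneForm_eq_zero (hh : IsMetric h) (hS : IsComplexForm h S J)
    {ΓN : F → F → F → F} (hΓN : IsLC h ΓN Set.univ)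
    (hSpar : ∀ n u v w, covTen ΓN S n u v w = 0)
    (hΓ : IsLC (coneMetric (sinhMetric h S)) Γ (coneSet (ℝ × F))) {p : ℝ × (ℝ × F)}
    (hp : 0 < p.1) (u v w : ℝ × (ℝ × F)) :
    covTen Γ (coneForm h S) p u v w = 0 := by
  have hd := differentiableAt_of_isLC_cone hh hS hΓ p.2.2
  have hdh : ∀ d V W, fderiv ℝ (fun ν => h ν V W) p.2.2 d
      = h p.2.2 (ΓN p.2.2 d V) W + h p.2.2 V (ΓN p.2.2 d W) := hΓN.2 p.2.2 trivial
  have hdS : ∀ d V W, fderiv ℝ (fun ν => S ν V W) p.2.2 d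
      = S p.2.2 (ΓN p.2.2 d V) W + S p.2.2 V (ΓN p.2.2 d W) := fun d V W => by
    rw [← sub_eq_zero, ← hSpar p.2.2 d V W, covTen]
    ring
  have key := hΓ.two_mul_covTen_eq (coneMetric_sinhMetric_comm hh hS.symm) hp
    (coneForm_eq_coneMetric_coneEndo hh hS p) (coneForm_comm hh hS.symm p) u v w
  simp only [fderiv_coneForm_apply (hd _ _).1 (hd _ _).2,
    fderiv_coneMetric_sinhMetric_apply (hd _ _).1 (hd _ _).2, coneEndo, hdh, hdS,
    hS.metric_apply_neg_endo hh, hS.apply_neg_endo hh] at key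
  have hΓNsymm : ∀ a b, ΓN p.2.2 a b = ΓN p.2.2 b a := hΓN.1 p.2.2 trivial
  have hhsymm : ∀ a b, h p.2.2 a b = h p.2.2 b a := (hh p.2.2).2.2
  -- bring the arguments of `ΓN`, `h` and `S` into a common order, so that terms of `key` cancel
  rw [hΓNsymm v.2.2 u.2.2, hΓNsymm (-J p.2.2 w.2.2) u.2.2, hΓNsymm (-J p.2.2 w.2.2) v.2.2,
    hΓNsymm w.2.2 u.2.2, hΓNsymm (-J p.2.2 v.2.2) u.2.2, hΓNsymm (-J p.2.2 v.2.2) w.2.2,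
    hhsymm (ΓN p.2.2 u.2.2 (-J p.2.2 w.2.2)) v.2.2,
    hS.symm p.2.2 (ΓN p.2.2 u.2.2 (-J p.2.2 w.2.2)),
    hhsymm (ΓN p.2.2 u.2.2 (-J p.2.2 v.2.2)) w.2.2,
    hS.symm p.2.2 (ΓN p.2.2 u.2.2 (-J p.2.2 v.2.2)),
    hS.symm p.2.2 w.2.2 v.2.2, hhsymm w.2.2 v.2.2, hS.symm p.2.2 (ΓN p.2.2 u.2.2 w.2.2),
    hhsymm (ΓN p.2.2 u.2.2 w.2.2) v.2.2] at key
  have hrw : p.1 * (cosh (2 * p.2.1) / p.1 * w.1 + sinh (2 * p.2.1) * w.2.1)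
      = cosh (2 * p.2.1) * w.1 + p.1 * (sinh (2 * p.2.1) * w.2.1) := by
    field_simp
  have hrv : p.1 * (cosh (2 * p.2.1) / p.1 * v.1 + sinh (2 * p.2.1) * v.2.1)
      = cosh (2 * p.2.1) * v.1 + p.1 * (sinh (2 * p.2.1) * v.2.1) := by
    field_simp
  linear_combination (1 / 2 : ℝ) * key
    - (p.1 * w.1 * S p.2.2 u.2.2 v.2.2 + p.1 * v.1 * S p.2.2 u.2.2 w.2.2) * cosh_sq (2 * p.2.1)
    + (u.2.1 * v.1 + u.1 * v.2.1 - p.1 * cosh (2 * p.2.1) * S p.2.2 u.2.2 v.2.2) * hrw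
    + (u.2.1 * w.1 + u.1 * w.2.1 - p.1 * cosh (2 * p.2.1) * S p.2.2 u.2.2 w.2.2) * hrv

end Cone

end SinhMetric

/-- if `(N,h)` carries a parallel symmetric 2-tensor `S` with `S̃² = -Id`,
then `g = -ds² + h - sinh(2s)S` on `M = ℝ × N` is nondegenerate, and the cone over
`(M,g)` admits a nontrivial parallel symmetric 2-tensor `T` with `T̃² = -Id`. -/
theorem complex_riemannian_case_construction
    {F : Type*} [NormedAddCommGroup F] [NormedSpace ℝ F]
    (h : F → F → F → ℝ) (hh : IsMetric h) (hhnd : Nondeg h Set.univ)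
    (ΓN : F → F → F → F) (hΓN : IsLC h ΓN Set.univ)
    (S : F → F → F → ℝ)
    (hSsym : ∀ n u v, S n u v = S n v u)
    (hSpar : ∀ n u v w : F, covTen ΓN S n u v w = 0)
    (Send : F → F → F)
    (hSend : ∀ n u v, S n u v = h n u (Send n v))
    (hS2 : ∀ n u, Send n (Send n u) = -u)
    (gM : (ℝ × F) → (ℝ × F) → (ℝ × F) → ℝ)
    (hgM : ∀ (x : ℝ × F) (u v : ℝ × F),
        gM x u v = -(u.1 * v.1) + h x.2 u.2 v.2
          - Real.sinh (2 * x.1) * S x.2 u.2 v.2) :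
    Nondeg gM Set.univ ∧
    (∀ Γc : (ℝ × (ℝ × F)) → (ℝ × (ℝ × F)) → (ℝ × (ℝ × F)) → (ℝ × (ℝ × F)),
      IsLC (coneMetric gM) Γc (coneSet (ℝ × F)) →
      ∃ (T : (ℝ × (ℝ × F)) → (ℝ × (ℝ × F)) → (ℝ × (ℝ × F)) → ℝ)
        (Tend : (ℝ × (ℝ × F)) → (ℝ × (ℝ × F)) → (ℝ × (ℝ × F))),
        (∀ p u v, T p u v = coneMetric gM p u (Tend p v)) ∧
        (∀ p u v, T p u v = T p v u) ∧
        (∃ p : ℝ × (ℝ × F), 0 < p.1 ∧ ∃ u v, T p u v ≠ 0) ∧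
        (∀ p : ℝ × (ℝ × F), 0 < p.1 → ∀ u v w, covTen Γc T p u v w = 0) ∧
        (∀ p : ℝ × (ℝ × F), 0 < p.1 → ∀ u, Tend p (Tend p u) = -u)) := by
  have hS : IsComplexForm h S Send := ⟨hSsym, hSend, hS2⟩
  obtain rfl : gM = sinhMetric h S := funext fun x => funext fun u => funext (hgM x u)
  refine ⟨nondeg_sinhMetric hh hhnd hS, fun Γc hΓc => ⟨coneForm h S, coneEndo Send,
    coneForm_eq_coneMetric_coneEndo hh hS, coneForm_comm hh hSsym, ?_,
    fun p hp => covTen_coneForm_eq_zero hh hS hΓN hSpar hΓc hp,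
    fun p hp => coneEndo_coneEndo hS hp.ne'⟩⟩
  have hS0 : S 0 0 0 = 0 := (hS.isLinearMap_right hh 0 0).map_zero
  exact ⟨(1, (0, 0)), one_pos, (1, (0, 0)), (0, (1, 0)), by simp [coneForm, hS0]⟩
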